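/- Let α ∈ (1,2), c > 1, θ admissible, φ the measure on (−∞,0) with φ((−∞,−x)) = x^{−α}θ(log x), and ψ(z) = ∫_{(−∞,0)} (e^{izx} − 1 − izx) dφ(x). Then for every s > 0 there is a unique z in the open lower half-plane {Im z < 0} with ψ(z) = s; moreover this z lies on the negative imaginary axis, i.e. z = −i·ξ(s) for a unique ξ(s) > 0. -/

import Mathlib

open MeasureTheory Set Filter

/-- The log-characteristic function of a negatively skewed semistable law with Levy
measure `φm` concentrated on the negative half-line:
`ψ(z) = ∫_{(-∞,0)} (e^{izx} - 1 - izx) dφ(x)`. -/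
noncomputable def psiSemi (φm : MeasureTheory.Measure ℝ) (z : ℂ) : ℂ :=
  ∫ x in Set.Iio (0 : ℝ),
    (Complex.exp (Complex.I * z * (x : ℂ)) - 1 - Complex.I * z * (x : ℂ)) ∂φm

open ComplexConjugate

/-!
On the negative imaginary axis, `ψ(-ik) = ∫ (e^{kx} - 1 - kx) dφ` is real, continuous and strictly
increasing in `k ≥ 0`, vanishes at `0` and is at least `(k - 1) φ(-∞, -1)`, so it takes every value
`s > 0` exactly once. Off the axis, `Im ψ(z) = ∫ (e^{-Im z · x} sin (Re z · x) - Re z · x) dφ` has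
the strict sign of `Re z`, so `ψ(z)` is not real there. Everything converges because `θ`, being
continuous and periodic, is bounded, and the resulting tail bound `φ(-∞, -t) ≤ M t^{-α}` with
`1 < α < 2` makes `∫ min (x², |x|) dφ` finite.
-/

theorem Complex.norm_exp_sub_one_sub_self_le {w : ℂ} (hw : w.re ≤ 0) :
    ‖Complex.exp w - 1 - w‖ ≤ 3 * min (‖w‖ ^ 2) ‖w‖ := by
  rcases le_total ‖w‖ 1 with h | h
  · rw [min_eq_left (by nlinarith [norm_nonneg w])]
    nlinarith [Complex.norm_exp_sub_one_sub_id_le h, norm_nonneg w]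
  · have hexp : ‖Complex.exp w‖ ≤ 1 := by rwa [Complex.norm_exp, Real.exp_le_one_iff]
    rw [min_eq_right (by nlinarith)]
    calc ‖Complex.exp w - 1 - w‖ ≤ ‖Complex.exp w‖ + ‖(1 : ℂ)‖ + ‖w‖ :=
          (norm_sub_le _ _).trans (add_le_add_left (norm_sub_le _ _) _)
      _ ≤ 3 * ‖w‖ := by rw [norm_one]; linarith

theorem min_sq_neg_mul_le {k x : ℝ} (hk : 0 ≤ k) (hx : x ≤ 0) :
    min ((k * x) ^ 2) (-(k * x)) ≤ (k ^ 2 + k) * min (x ^ 2) (-x) := by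
  rcases le_total (x ^ 2) (-x) with h | h
  · rw [min_eq_left h]
    exact (min_le_left _ _).trans (by nlinarith [sq_nonneg x])
  · rw [min_eq_right h]
    exact (min_le_right _ _).trans (by nlinarith [sq_nonneg k, mul_nonneg hk (neg_nonneg.2 hx)])

theorem exp_mul_mul_sin_sub_pos {a k x : ℝ} (ha : 0 < a) (hk : 0 ≤ k) (hx : x < 0) :
    0 < Real.exp (k * x) * Real.sin (a * x) - a * x := by
  have hax : a * x < 0 := mul_neg_of_pos_of_neg ha hx
  rcases le_or_gt 0 (Real.sin (a * x)) with hsin | hsin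
  · nlinarith [mul_nonneg (Real.exp_pos (k * x)).le hsin]
  · have hexp : Real.exp (k * x) ≤ 1 := Real.exp_le_one_iff.2 (by nlinarith)
    have hsin_gt : a * x < Real.sin (a * x) := by
      simpa using Real.sin_lt (neg_pos.2 hax)
    nlinarith

theorem exp_mul_sub_one_sub_self_strictMonoOn {x : ℝ} (hx : x < 0) :
    StrictMonoOn (fun k => Real.exp (k * x) - 1 - k * x) (Ici 0) := by
  intro k₁ hk₁ k₂ _ hk
  have hδ : (k₂ - k₁) * x < 0 := mul_neg_of_pos_of_neg (sub_pos.2 hk) hx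
  have hexp₁ : Real.exp (k₁ * x) ≤ 1 := Real.exp_le_one_iff.2 (by nlinarith [mem_Ici.1 hk₁])
  have hsplit : Real.exp (k₂ * x) = Real.exp (k₁ * x) * Real.exp ((k₂ - k₁) * x) := by
    rw [← Real.exp_add]; ring_nf
  have hexpδ := Real.add_one_lt_exp hδ.ne
  nlinarith [mul_lt_mul_of_pos_left hexpδ (Real.exp_pos (k₁ * x))]

theorem setIntegral_pos_of_forall_pos {X : Type*} [MeasurableSpace X] {μ : Measure X} {s : Set X}
    (hs : MeasurableSet s) {f : X → ℝ} (hf : IntegrableOn f s μ) (hpos : ∀ x ∈ s, 0 < f x)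
    (hμ : 0 < μ s) : 0 < ∫ x in s, f x ∂μ := by
  rw [setIntegral_pos_iff_support_of_nonneg_ae
    (ae_restrict_of_forall_mem hs fun x hx => (hpos x hx).le) hf]
  rwa [inter_eq_right.2 fun x hx => Function.mem_support.2 (hpos x hx).ne']

theorem integrableOn_min_sq_neg_of_tail_le {μ : Measure ℝ} {α C : ℝ} (hα₁ : 1 < α) (hα₂ : α < 2)
    (htail : ∀ t, 0 < t → μ (Iio (-t)) ≤ ENNReal.ofReal (C * t ^ (-α))) :
    IntegrableOn (fun x => min (x ^ 2) (-x)) (Iio 0) μ := by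
  have hnonneg : 0 ≤ᵐ[μ.restrict (Iio 0)] fun x : ℝ => min (x ^ 2) (-x) :=
    ae_restrict_of_forall_mem measurableSet_Iio fun x hx =>
      le_min (sq_nonneg x) (neg_nonneg.2 (le_of_lt hx))
  have hcont : Continuous fun x : ℝ => min (x ^ 2) (-x) := by fun_prop
  refine ⟨hcont.aestronglyMeasurable, (hasFiniteIntegral_iff_ofReal hnonneg).2 ?_⟩
  -- Layer cake: the level set `{t < min (x ^ 2) (-x)}` lies in `Iio (-max t √t)`, so its measure is
  -- at most `C * min (t ^ (-α)) (t ^ (-α / 2))`, which is integrable on `Ioi 0` since `1 < α < 2`.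
  have hlevel : ∀ t, 0 < t →
      μ.restrict (Iio 0) {x | t < min (x ^ 2) (-x)} ≤ μ (Iio (-t)) ∧
      μ.restrict (Iio 0) {x | t < min (x ^ 2) (-x)} ≤ μ (Iio (-t ^ (1 / 2 : ℝ))) := by
    intro t ht
    refine ⟨(Measure.restrict_le_self _).trans (measure_mono fun x hx => ?_),
      (Measure.restrict_le_self _).trans (measure_mono fun x hx => ?_)⟩ <;>
      simp only [mem_ofPred_eq, lt_min_iff] at hx
    · simp only [mem_Iio]; linarith
    · rw [← Real.sqrt_eq_rpow, mem_Iio, lt_neg]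
      exact (Real.sqrt_lt' (by linarith)).2 (by nlinarith)
  have hfin : ∀ {s : Set ℝ} {p : ℝ}, IntegrableOn (fun t => t ^ p) s →
      ∫⁻ t in s, ENNReal.ofReal (C * t ^ p) < ⊤ :=
    fun h => (h.const_mul C).lintegral_lt_top
  rw [lintegral_eq_lintegral_meas_lt _ hnonneg hcont.aemeasurable,
    ← Ioc_union_Ioi_eq_Ioi zero_le_one, lintegral_union measurableSet_Ioi Ioc_disjoint_Ioi_same]
  refine ENNReal.add_lt_top.2 ⟨?_, ?_⟩
  · refine (setLIntegral_mono' measurableSet_Ioc fun t ht => ?_).trans_lt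
      (hfin (p := 1 / 2 * -α) ?_)
    · rw [Real.rpow_mul ht.1.le]
      exact (hlevel t ht.1).2.trans (htail _ (Real.rpow_pos_of_pos ht.1 _))
    · rw [integrableOn_Ioc_iff_integrableOn_Ioo, intervalIntegral.integrableOn_Ioo_rpow_iff one_pos]
      linarith
  · refine (setLIntegral_mono' measurableSet_Ioi fun t ht => ?_).trans_lt
      (hfin (integrableOn_Ioi_rpow_of_lt (a := -α) (by linarith) one_pos))
    exact (hlevel t (zero_lt_one.trans ht)).1.trans (htail t (zero_lt_one.trans ht))

noncomputable def psiIntegrand (z : ℂ) (x : ℝ) : ℂ :=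
  Complex.exp (Complex.I * z * x) - 1 - Complex.I * z * x

noncomputable def psiAxis (μ : Measure ℝ) (k : ℝ) : ℝ :=
  ∫ x in Iio 0, (Real.exp (k * x) - 1 - k * x) ∂μ

theorem norm_psiIntegrand_le {z : ℂ} (hz : z.im ≤ 0) {x : ℝ} (hx : x ≤ 0) :
    ‖psiIntegrand z x‖ ≤ 3 * (‖z‖ ^ 2 + ‖z‖) * min (x ^ 2) (-x) := by
  have hre : (Complex.I * z * x).re ≤ 0 := by
    simp only [Complex.mul_re, Complex.I_re, Complex.I_im, Complex.ofReal_re, Complex.ofReal_im]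
    nlinarith
  have hnorm : ‖Complex.I * z * x‖ = -(‖z‖ * x) := by
    rw [norm_mul, norm_mul, Complex.norm_I, Complex.norm_real, Real.norm_eq_abs, one_mul,
      abs_of_nonpos hx, mul_neg]
  calc ‖psiIntegrand z x‖ ≤ 3 * min (‖Complex.I * z * x‖ ^ 2) ‖Complex.I * z * x‖ :=
        Complex.norm_exp_sub_one_sub_self_le hre
    _ = 3 * min ((‖z‖ * x) ^ 2) (-(‖z‖ * x)) := by rw [hnorm, neg_sq]
    _ ≤ 3 * ((‖z‖ ^ 2 + ‖z‖) * min (x ^ 2) (-x)) := by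
        gcongr; exact min_sq_neg_mul_le (norm_nonneg z) hx
    _ = 3 * (‖z‖ ^ 2 + ‖z‖) * min (x ^ 2) (-x) := by ring

theorem psiIntegrand_neg_I_mul (k x : ℝ) :
    psiIntegrand (-(Complex.I * k)) x = ((Real.exp (k * x) - 1 - k * x : ℝ) : ℂ) := by
  have h : Complex.I * -(Complex.I * k) * x = ((k * x : ℝ) : ℂ) := by
    push_cast; ring_nf; rw [Complex.I_sq]; ring
  rw [psiIntegrand, h, ← Complex.ofReal_exp]
  push_cast; ring

theorem im_psiIntegrand (z : ℂ) (x : ℝ) :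
    (psiIntegrand z x).im = Real.exp (-z.im * x) * Real.sin (z.re * x) - z.re * x := by
  have h : Complex.I * z * x = ((-z.im * x : ℝ) : ℂ) + ((z.re * x : ℝ) : ℂ) * Complex.I := by
    apply Complex.ext <;> simp
  rw [psiIntegrand, h, Complex.sub_im, Complex.sub_im, Complex.exp_im]
  simp

theorem psiIntegrand_neg_conj (z : ℂ) (x : ℝ) :
    psiIntegrand (-conj z) x = conj (psiIntegrand z x) := by
  simp [psiIntegrand, ← Complex.exp_conj]

theorem abs_exp_sub_one_sub_self_le {k x : ℝ} (hk : 0 ≤ k) (hx : x ≤ 0) :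
    |Real.exp (k * x) - 1 - k * x| ≤ 3 * (k ^ 2 + k) * min (x ^ 2) (-x) := by
  have h := norm_psiIntegrand_le (z := -(Complex.I * k)) (by simpa using hk) hx
  rwa [psiIntegrand_neg_I_mul, Complex.norm_real, Real.norm_eq_abs, norm_neg, norm_mul,
    Complex.norm_I, one_mul, Complex.norm_real, Real.norm_of_nonneg hk] at h

theorem psiSemi_eq_integral (μ : Measure ℝ) (z : ℂ) :
    psiSemi μ z = ∫ x in Iio 0, psiIntegrand z x ∂μ :=
  rfl

theorem psiSemi_neg_conj (μ : Measure ℝ) (z : ℂ) : psiSemi μ (-conj z) = conj (psiSemi μ z) := by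
  simp only [psiSemi_eq_integral, psiIntegrand_neg_conj, integral_conj]

theorem psiSemi_neg_I_mul (μ : Measure ℝ) (k : ℝ) :
    psiSemi μ (-(Complex.I * k)) = psiAxis μ k := by
  simp only [psiSemi_eq_integral, psiIntegrand_neg_I_mul, psiAxis, integral_complex_ofReal]

section LevyMeasure

variable {μ : Measure ℝ} (hm : IntegrableOn (fun x => min (x ^ 2) (-x)) (Iio 0) μ)
include hm

theorem integrableOn_psiIntegrand {z : ℂ} (hz : z.im ≤ 0) :
    IntegrableOn (psiIntegrand z) (Iio 0) μ :=
  (hm.const_mul _).mono' (by unfold psiIntegrand; fun_prop)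
    (ae_restrict_of_forall_mem measurableSet_Iio fun x hx => norm_psiIntegrand_le hz (le_of_lt hx))

theorem integrableOn_exp_sub_one_sub_self {k : ℝ} (hk : 0 ≤ k) :
    IntegrableOn (fun x => Real.exp (k * x) - 1 - k * x) (Iio 0) μ :=
  (hm.const_mul _).mono' (by fun_prop)
    (ae_restrict_of_forall_mem measurableSet_Iio fun x hx =>
      abs_exp_sub_one_sub_self_le hk (le_of_lt hx))

theorem im_psiSemi_pos (hμ : 0 < μ (Iio 0)) {z : ℂ} (hre : 0 < z.re) (him : z.im ≤ 0) :
    0 < (psiSemi μ z).im := by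
  have hint := integrableOn_psiIntegrand hm him
  rw [psiSemi_eq_integral, ← RCLike.im_to_complex, ← integral_im hint]
  refine setIntegral_pos_of_forall_pos measurableSet_Iio hint.im (fun x hx => ?_) hμ
  rw [RCLike.im_to_complex, im_psiIntegrand]
  exact exp_mul_mul_sin_sub_pos hre (neg_nonneg.2 him) hx

theorem re_eq_zero_of_im_psiSemi_eq_zero (hμ : 0 < μ (Iio 0)) {z : ℂ} (him : z.im ≤ 0)
    (h : (psiSemi μ z).im = 0) : z.re = 0 := by
  rcases lt_trichotomy z.re 0 with hre | hre | hre
  · have := im_psiSemi_pos hm hμ (z := -conj z) (by simpa using hre) (by simpa using him)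
    rw [psiSemi_neg_conj, Complex.conj_im, h, neg_zero] at this
    exact absurd this (lt_irrefl 0)
  · exact hre
  · exact absurd h (im_psiSemi_pos hm hμ hre him).ne'

theorem strictMonoOn_psiAxis (hμ : 0 < μ (Iio 0)) : StrictMonoOn (psiAxis μ) (Ici 0) := by
  intro k₁ hk₁ k₂ hk₂ hk
  have hint₁ := integrableOn_exp_sub_one_sub_self hm hk₁
  have hint₂ := integrableOn_exp_sub_one_sub_self hm hk₂
  rw [← sub_pos, psiAxis, psiAxis, ← integral_sub hint₂ hint₁]
  exact setIntegral_pos_of_forall_pos measurableSet_Iio (hint₂.sub hint₁)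
    (fun x hx => sub_pos.2 (exp_mul_sub_one_sub_self_strictMonoOn hx hk₁ hk₂ hk)) hμ

theorem continuousOn_psiAxis : ContinuousOn (psiAxis μ) (Ici 0) := by
  intro k hk
  have hK : ContinuousOn (psiAxis μ) (Icc 0 (k + 1)) := by
    refine continuousOn_of_dominated (fun _ _ => by fun_prop) (fun k' hk' => ?_)
      (hm.const_mul (3 * ((k + 1) ^ 2 + (k + 1)))) (.of_forall fun x => by fun_prop)
    refine ae_restrict_of_forall_mem measurableSet_Iio fun x hx => ?_
    refine (abs_exp_sub_one_sub_self_le hk'.1 (le_of_lt hx)).trans ?_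
    have : 0 ≤ min (x ^ 2) (-x) := le_min (sq_nonneg x) (neg_nonneg.2 (le_of_lt hx))
    gcongr <;> linarith [hk'.1, hk'.2]
  exact (hK k ⟨hk, by linarith⟩).mono_of_mem_nhdsWithin
    (mem_nhdsWithin.2 ⟨Iio (k + 1), isOpen_Iio, by simp, fun y hy => ⟨hy.2, hy.1.le⟩⟩)

theorem le_psiAxis (hfin : μ (Iio (-1)) ≠ ⊤) {k : ℝ} (hk : 0 ≤ k) :
    (k - 1) * μ.real (Iio (-1)) ≤ psiAxis μ k := by
  have hint := integrableOn_exp_sub_one_sub_self hm hk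
  calc (k - 1) * μ.real (Iio (-1)) ≤ ∫ x in Iio (-1), (Real.exp (k * x) - 1 - k * x) ∂μ :=
        setIntegral_ge_of_const_le_real measurableSet_Iio hfin
          (fun x (hx : x < -1) => by nlinarith [Real.exp_pos (k * x)])
          (hint.mono_set (Iio_subset_Iio (by norm_num)))
    _ ≤ psiAxis μ k :=
        setIntegral_mono_set hint
          (ae_restrict_of_forall_mem measurableSet_Iio fun x _ => by
            simp only [Pi.zero_apply]; linarith [Real.add_one_le_exp (k * x)])
          (Iio_subset_Iio (by norm_num : (-1 : ℝ) ≤ 0)).eventuallyLE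

theorem eq_neg_I_mul_of_psiSemi_eq_ofReal (hμ : 0 < μ (Iio 0)) {z : ℂ} (him : z.im < 0) {s : ℝ}
    (h : psiSemi μ z = s) : z = -(Complex.I * ↑(-z.im)) := by
  have hre := re_eq_zero_of_im_psiSemi_eq_zero hm hμ him.le (by rw [h, Complex.ofReal_im])
  apply Complex.ext <;> simp [hre]

theorem existsUnique_pos_psiAxis_eq (h₀ : 0 < μ (Iio (-1))) (hfin : μ (Iio (-1)) ≠ ⊤) {s : ℝ}
    (hs : 0 < s) : ∃! k, 0 < k ∧ psiAxis μ k = s := by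
  have hμ : 0 < μ (Iio 0) := h₀.trans_le (measure_mono (Iio_subset_Iio (by norm_num)))
  have hμ₁ : 0 < μ.real (Iio (-1)) := ENNReal.toReal_pos h₀.ne' hfin
  set K := s / μ.real (Iio (-1)) + 2
  have hK : 0 ≤ K := by positivity
  have hsK : s ≤ psiAxis μ K := by
    refine le_trans ?_ (le_psiAxis hm hfin hK)
    rw [show K - 1 = s / μ.real (Iio (-1)) + 1 by ring, add_mul, div_mul_cancel₀ _ hμ₁.ne']
    linarith
  have hzero : psiAxis μ 0 = 0 := by simp [psiAxis]
  obtain ⟨k, hk, hks⟩ := intermediate_value_Icc hK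
    ((continuousOn_psiAxis hm).mono Icc_subset_Ici_self) ⟨by rw [hzero]; exact hs.le, hsK⟩
  have hk₀ : 0 < k := hk.1.lt_of_ne fun h => by simp [← h, hzero, hs.ne] at hks
  exact ⟨k, ⟨hk₀, hks⟩, fun k' hk' =>
    (strictMonoOn_psiAxis hm hμ).injOn (le_of_lt hk'.1) hk.1 (hk'.2.trans hks.symm)⟩

end LevyMeasure

theorem psiSemi_unique_pole_general
    (α c : ℝ) (hα : 1 < α ∧ α < 2) (hc : 1 < c)
    (θ : ℝ → ℝ) (hθc : Continuous θ) (hθpos : ∀ y : ℝ, 0 < θ y)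
    (hθper : Function.Periodic θ (Real.log (c ^ (1 / α))))
    (φm : MeasureTheory.Measure ℝ)
    (hφtail : ∀ x : ℝ, 0 < x → φm (Set.Iio (-x)) = ENNReal.ofReal (x ^ (-α) * θ (Real.log x))) :
    ∀ s : ℝ, 0 < s →
      (∃! z : ℂ, z.im < 0 ∧ psiSemi φm z = (s : ℂ)) ∧
      (∀ z : ℂ, z.im < 0 → psiSemi φm z = (s : ℂ) →
        ∃ k : ℝ, 0 < k ∧ z = -(Complex.I * (k : ℂ))) ∧
      (∃! k : ℝ, 0 < k ∧ psiSemi φm (-(Complex.I * (k : ℂ))) = (s : ℂ)) := by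
  have hT : Real.log (c ^ (1 / α)) ≠ 0 :=
    (Real.log_pos (Real.one_lt_rpow hc (by have := hα.1; positivity))).ne'
  obtain ⟨M, hM⟩ := (hθper.compact_of_continuous hT hθc).bddAbove
  have hm := integrableOn_min_sq_neg_of_tail_le hα.1 hα.2 (C := M) fun t ht => by
    rw [hφtail t ht, mul_comm M]
    gcongr
    exact hM (mem_range_self _)
  have h₁ : φm (Iio (-1)) = ENNReal.ofReal (θ 0) := by simpa using hφtail 1 one_pos
  have h₀ : 0 < φm (Iio (-1)) := h₁ ▸ ENNReal.ofReal_pos.2 (hθpos 0)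
  have hμ : 0 < φm (Iio 0) := h₀.trans_le (measure_mono (Iio_subset_Iio (by norm_num)))
  intro s hs
  have haxis (k : ℝ) : psiSemi φm (-(Complex.I * k)) = s ↔ psiAxis φm k = s := by
    rw [psiSemi_neg_I_mul, Complex.ofReal_inj]
  obtain ⟨ξ, ⟨hξ, hξs⟩, huniq⟩ := existsUnique_pos_psiAxis_eq hm h₀ (h₁ ▸ ENNReal.ofReal_ne_top) hs
  have hpole (z : ℂ) (hz : z.im < 0) (hzs : psiSemi φm z = s) :
      ∃ k : ℝ, 0 < k ∧ z = -(Complex.I * k) :=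
    ⟨-z.im, neg_pos.2 hz, eq_neg_I_mul_of_psiSemi_eq_ofReal hm hμ hz hzs⟩
  refine ⟨⟨-(Complex.I * ξ), ⟨by simpa using hξ, (haxis ξ).2 hξs⟩, ?_⟩, hpole,
    ⟨ξ, ⟨hξ, (haxis ξ).2 hξs⟩, fun k hk => huniq k ⟨hk.1, (haxis k).1 hk.2⟩⟩⟩
  rintro z ⟨hz, hzs⟩
  obtain ⟨k, hk, rfl⟩ := hpole z hz hzs
  rw [huniq k ⟨hk, (haxis k).1 hzs⟩]

/-- Lemma 4.1: for every `s > 0` there is a unique `z` in the open lower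
half-plane with `ψ(z) = s`, and it lies on the negative imaginary axis: `z = -i ξ(s)`
for a unique `ξ(s) > 0`. -/
theorem psiSemi_unique_pole
    (α c : ℝ) (hα : 1 < α ∧ α < 2) (hc : 1 < c)
    (θ : ℝ → ℝ) (hθc : Continuous θ) (hθpos : ∀ y : ℝ, 0 < θ y)
    (hθper : Function.Periodic θ (Real.log (c ^ (1 / α))))
    (hθmono : AntitoneOn (fun x : ℝ => x ^ (-α) * θ (Real.log x)) (Set.Ioi 0))
    (φm : MeasureTheory.Measure ℝ)
    (hφtail : ∀ x : ℝ, 0 < x → φm (Set.Iio (-x)) = ENNReal.ofReal (x ^ (-α) * θ (Real.log x)))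
    (hφsupp : φm (Set.Ici 0) = 0) :
    ∀ s : ℝ, 0 < s →
      (∃! z : ℂ, z.im < 0 ∧ psiSemi φm z = (s : ℂ)) ∧
      (∀ z : ℂ, z.im < 0 → psiSemi φm z = (s : ℂ) →
        ∃ k : ℝ, 0 < k ∧ z = -(Complex.I * (k : ℂ))) ∧
      (∃! k : ℝ, 0 < k ∧ psiSemi φm (-(Complex.I * (k : ℂ))) = (s : ℂ)) :=
  psiSemi_unique_pole_general α c hα hc θ hθc hθpos hθper φm hφtail
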